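/- Correctness of asynchronous R_z injection, case ZZ = 0, outcome −: starting from ψ = α|0⟩ + β|1⟩ on the data qubit and |+⟩ on the ancilla, projecting onto the ZZ = +1 eigenspace, applying R_z(θ) to the ancilla, and then projecting the ancilla onto |−⟩ and discarding it, yields (up to a nonzero scalar) Z·R_z(θ)ψ, i.e., the desired state up to a Pauli-Z byproduct. -/

import Mathlib

open Complex

noncomputable def plusV : Fin 2 → ℂ := fun _ => 1 / Real.sqrt 2

noncomputable def minusV : Fin 2 → ℂ :=
  fun i => if i = 0 then (1 / Real.sqrt 2 : ℂ) else -(1 / Real.sqrt 2)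

/-- `ψ = α|0⟩ + β|1⟩`. -/
def psi (a b : ℂ) : Fin 2 → ℂ := fun i => if i = 0 then a else b

/-- Data qubit in `ψ`, ancilla in `|+⟩`. -/
noncomputable def init (a b : ℂ) : Fin 2 × Fin 2 → ℂ := fun p => psi a b p.1 * plusV p.2

/-- The `ZZ = +1` projector `|00⟩⟨00| + |11⟩⟨11|`. -/
def P0 (v : Fin 2 × Fin 2 → ℂ) : Fin 2 × Fin 2 → ℂ :=
  fun p => if p.1 = p.2 then v p else 0

/-- `R_z(θ)` applied to the ancilla. -/
noncomputable def rzAncilla (θ : ℝ) (v : Fin 2 × Fin 2 → ℂ) : Fin 2 × Fin 2 → ℂ :=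
  fun p => (if p.2 = 0 then 1 else Complex.exp (θ * Complex.I)) * v p

/-- Project the ancilla onto `|−⟩` and discard it: `(id ⊗ ⟨−|)`. -/
noncomputable def projMinus (v : Fin 2 × Fin 2 → ℂ) : Fin 2 → ℂ :=
  fun i => ∑ j : Fin 2, minusV j * v (i, j)

/-- Asynchronous R_z injection, case `ZZ = 0`, outcome `−`: the result is
`Z·R_z(θ)ψ` up to a nonzero scalar (Pauli-Z byproduct). -/
theorem rz_injection_zz0_minus (a b : ℂ) (θ : ℝ) :
    ∃ s : ℂ, s ≠ 0 ∧
      projMinus (rzAncilla θ (P0 (init a b)))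
        = fun i => s * ((if i = 0 then (1 : ℂ) else -1) *
            ((if i = 0 then 1 else Complex.exp (θ * Complex.I)) * psi a b i)) := by
  refine ⟨1/2, by norm_num, ?_⟩
  funext i
  fin_cases i <;>
    simp [projMinus, rzAncilla, P0, init, plusV, minusV, psi, Fin.sum_univ_two] <;>
    · have h2 : ((Real.sqrt 2 : ℝ) : ℂ) ≠ 0 := by
        simpa using Real.sqrt_ne_zero'.2 (by norm_num)
      field_simp
      ring_nf
      congr 1
      norm_cast
      rw [Real.sq_sqrt] <;> norm_num
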